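/- Let n ≥ 1 and let P ∈ ℝ^{n×n} have nonnegative entries. Suppose p ∈ (0,1) is such that every entry of the k-th matrix power of P satisfies (P^k)_{ij} ≤ p^k for all integers k ≥ 1 and all i,j. Let π ∈ (0,1)^n with Σ_i π_i = 1, let y_{i,t} ∈ ℝ^m satisfy y_{i,0} = 0 and y_{i,t+1} = Σ_{j=1}^n P_{ij} y_{j,t} + g_{i,t} for all i and t ≥ 0, where ‖g_{i,t}‖_* ≤ L for some L ≥ 0, and let ȳ_t = Σ_{i=1}^n π_i y_{i,t}. Then for all t ≥ 1, ‖ȳ_t‖_* ≤ n²L/(1 − p) + L. -/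

import Mathlib

open Finset
open scoped RealInnerProductSpace BigOperators

/-!
Test `ȳ_t` against a vector `a` with `N a ≤ 1`. Since `⟪g, a⟫ ≤ ‖g‖_* ≤ L`, the scalars
`z i t = ⟪y i t, a⟫` satisfy `z (t + 1) ≤ P z t + L`, so by nonnegativity of `P`,
`z i t ≤ L ∑_{s<t} ∑_j (P^s)_{ij} ≤ L (1 + n p / (1 - p))`, and averaging with the weights `π`
gives the bound. The one analytic input is that the set defining `‖v‖_*` is bounded above
(otherwise `sSup` returns a junk value): the `N`-unit ball is bounded because all norms on a
finite-dimensional space are equivalent.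
-/

section NormOnFiniteDimensional

variable {E : Type*}

def NormedBy (E : Type*) (_N : E → ℝ) : Type _ := E

lemma nonneg_of_add_le_of_smul [AddCommGroup E] [Module ℝ E] (N : E → ℝ)
    (hN_add : ∀ a b, N (a + b) ≤ N a + N b) (hN_smul : ∀ (c : ℝ) a, N (c • a) = |c| * N a)
    (a : E) : 0 ≤ N a := by
  have hN_zero : N 0 = 0 := by simpa using hN_smul 0 0
  have h := hN_add a ((-1 : ℝ) • a)
  rw [hN_smul, neg_one_smul, add_neg_cancel, hN_zero, abs_neg, abs_one, one_mul] at h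
  linarith

theorem exists_norm_le_mul [NormedAddCommGroup E] [NormedSpace ℝ E] [FiniteDimensional ℝ E]
    (N : E → ℝ) (hN_add : ∀ a b, N (a + b) ≤ N a + N b)
    (hN_smul : ∀ (c : ℝ) a, N (c • a) = |c| * N a) (hN_eq_zero : ∀ a, N a = 0 ↔ a = 0) :
    ∃ C, 0 ≤ C ∧ ∀ a, ‖a‖ ≤ C * N a := by
  let _ : AddCommGroup (NormedBy E N) := inferInstanceAs (AddCommGroup E)
  let _ : Module ℝ (NormedBy E N) := inferInstanceAs (Module ℝ E)
  let _ : Norm (NormedBy E N) := ⟨N⟩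
  have core : NormedSpace.Core ℝ (NormedBy E N) :=
    { norm_nonneg := nonneg_of_add_le_of_smul N hN_add hN_smul
      norm_smul := hN_smul
      norm_triangle := hN_add
      norm_eq_zero_iff := hN_eq_zero }
  let _ : NormedAddCommGroup (NormedBy E N) := .ofCore core
  let _ : NormedSpace ℝ (NormedBy E N) := .ofCore core
  have : FiniteDimensional ℝ (NormedBy E N) := inferInstanceAs (FiniteDimensional ℝ E)
  -- all norms on a finite-dimensional space are equivalent: the identity `(E, N) → E` is bounded
  let id : NormedBy E N →L[ℝ] E := ⟨LinearMap.id, LinearMap.continuous_of_finiteDimensional _⟩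
  exact ⟨‖id‖, norm_nonneg _, id.le_opNorm⟩

end NormOnFiniteDimensional

section DualNorm

variable {E : Type*} [NormedAddCommGroup E] [InnerProductSpace ℝ E]

noncomputable def dualNorm (N : E → ℝ) (v : E) : ℝ :=
  sSup {r : ℝ | ∃ a, N a ≤ 1 ∧ r = ⟪v, a⟫}

lemma inner_le_dualNorm [FiniteDimensional ℝ E] (N : E → ℝ)
    (hN_add : ∀ a b, N (a + b) ≤ N a + N b)
    (hN_smul : ∀ (c : ℝ) a, N (c • a) = |c| * N a) (hN_eq_zero : ∀ a, N a = 0 ↔ a = 0)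
    (v : E) {a : E} (ha : N a ≤ 1) : ⟪v, a⟫ ≤ dualNorm N v := by
  obtain ⟨C, hC0, hC⟩ := exists_norm_le_mul N hN_add hN_smul hN_eq_zero
  refine le_csSup ⟨‖v‖ * C, ?_⟩ ⟨a, ha, rfl⟩
  rintro r ⟨b, hb, rfl⟩
  calc ⟪v, b⟫ ≤ ‖v‖ * ‖b‖ := real_inner_le_norm v b
    _ ≤ ‖v‖ * (C * N b) := by gcongr; exact hC b
    _ ≤ ‖v‖ * C := by gcongr; exact mul_le_of_le_one_right hC0 hb

lemma dualNorm_le {N : E → ℝ} {v : E} {B : ℝ} (hN_zero : N 0 ≤ 1)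
    (h : ∀ a, N a ≤ 1 → ⟪v, a⟫ ≤ B) : dualNorm N v ≤ B :=
  csSup_le ⟨0, 0, hN_zero, (inner_zero_right v).symm⟩ (by rintro r ⟨a, ha, rfl⟩; exact h a ha)

end DualNorm

section NonnegMatrix

variable {ι : Type*} [Fintype ι] [DecidableEq ι] {P : Matrix ι ι ℝ}

lemma sum_mul_sum_pow_apply (P : Matrix ι ι ℝ) (s : ℕ) (i : ι) :
    ∑ j, P i j * ∑ k, (P ^ s) j k = ∑ k, (P ^ (s + 1)) i k := by
  simp only [pow_succ', Matrix.mul_apply, mul_sum]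
  exact sum_comm

theorem le_mul_sum_range_sum_pow_apply (hP : ∀ i j, 0 ≤ P i j) {z : ι → ℕ → ℝ} {L : ℝ}
    (h0 : ∀ i, z i 0 ≤ 0) (hrec : ∀ i t, z i (t + 1) ≤ ∑ j, P i j * z j t + L) (t : ℕ) (i : ι) :
    z i t ≤ L * ∑ s ∈ range t, ∑ j, (P ^ s) i j := by
  induction t generalizing i with
  | zero => simpa using h0 i
  | succ t ih =>
    calc z i (t + 1) ≤ ∑ j, P i j * (L * ∑ s ∈ range t, ∑ k, (P ^ s) j k) + L :=
          (hrec i t).trans (by gcongr with j; exacts [hP i j, ih j])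
      _ = L * ∑ s ∈ range (t + 1), ∑ k, (P ^ s) i k := by
          simp only [sum_range_succ', pow_zero, Matrix.one_apply, sum_ite_eq, mem_univ,
            if_true, ← sum_mul_sum_pow_apply, mul_sum]
          rw [sum_comm]
          simp only [mul_add, mul_sum, mul_one, mul_left_comm]

theorem sum_range_sum_pow_apply_le {p : ℝ} (hp0 : 0 ≤ p) (hp1 : p < 1)
    (hP : ∀ k : ℕ, 1 ≤ k → ∀ i j, (P ^ k) i j ≤ p ^ k) (t : ℕ) (i : ι) :
    ∑ s ∈ range t, ∑ j, (P ^ s) i j ≤ 1 + Fintype.card ι * p / (1 - p) := by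
  have h1p : 0 < 1 - p := by linarith
  cases t with
  | zero => rw [sum_range_zero]; positivity
  | succ t =>
    rw [sum_range_succ', pow_zero]
    simp only [Matrix.one_apply, sum_ite_eq, mem_univ, if_true]
    have hrow : ∀ s ∈ range t, ∑ j, (P ^ (s + 1)) i j ≤ Fintype.card ι * p * p ^ s := by
      intro s _
      calc ∑ j, (P ^ (s + 1)) i j ≤ ∑ _j : ι, p ^ (s + 1) :=
            sum_le_sum fun j _ => hP (s + 1) (by omega) i j
        _ = Fintype.card ι * p * p ^ s := by
            rw [sum_const, card_univ, nsmul_eq_mul, pow_succ]; ring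
    have hgeom : ∑ s ∈ range t, p ^ s ≤ 1 / (1 - p) := by
      have h := geom_sum_Ico_le_of_lt_one (m := 0) (n := t) hp0 hp1
      rwa [← range_eq_Ico, pow_zero] at h
    calc ∑ s ∈ range t, ∑ j, (P ^ (s + 1)) i j + 1
        ≤ Fintype.card ι * p * ∑ s ∈ range t, p ^ s + 1 := by
          rw [mul_sum]; linarith [sum_le_sum hrow]
      _ ≤ Fintype.card ι * p * (1 / (1 - p)) + 1 := by gcongr
      _ = 1 + Fintype.card ι * p / (1 - p) := by ring

end NonnegMatrix

theorem dual_average_norm_bound_general {m : ℕ} (n : ℕ)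
    -- `N` is a norm on `ℝ^m` and `Nd` its dual norm
    (N : EuclideanSpace ℝ (Fin m) → ℝ)
    (hNtri : ∀ a b, N (a + b) ≤ N a + N b)
    (hNsmul : ∀ (c : ℝ) (a : EuclideanSpace ℝ (Fin m)), N (c • a) = |c| * N a)
    (hNdef : ∀ a, N a = 0 ↔ a = 0)
    (Nd : EuclideanSpace ℝ (Fin m) → ℝ)
    (hNd : ∀ v, Nd v = sSup {r : ℝ | ∃ a, N a ≤ 1 ∧ r = ⟪v, a⟫})
    -- `P` has nonnegative entries and entrywise geometrically decaying powers
    (P : Matrix (Fin n) (Fin n) ℝ)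
    (hPnn : ∀ i j, 0 ≤ P i j)
    (p : ℝ) (hp0 : 0 < p) (hp1 : p < 1)
    (hPpow : ∀ k : ℕ, 1 ≤ k → ∀ i j, (P ^ k) i j ≤ p ^ k)
    -- the weights `π ∈ (0,1)^n`
    (π : Fin n → ℝ) (hπ0 : ∀ i, 0 < π i)
    (hπsum : ∑ i, π i = 1)
    -- the dual variables and their bounded increments
    (L : ℝ) (hL : 0 ≤ L)
    (g y : Fin n → ℕ → EuclideanSpace ℝ (Fin m))
    (hg : ∀ i t, Nd (g i t) ≤ L)
    (hy0 : ∀ i, y i 0 = 0)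
    (hyrec : ∀ i t, y i (t + 1) = (∑ j, P i j • y j t) + g i t)
    -- the weighted dual average
    (ybar : ℕ → EuclideanSpace ℝ (Fin m))
    (hybar : ∀ t, ybar t = ∑ i, π i • y i t) :
    ∀ t : ℕ, 1 ≤ t → Nd (ybar t) ≤ (n : ℝ) ^ 2 * L / (1 - p) + L := by
  obtain rfl : Nd = dualNorm N := funext hNd
  intro t _
  have hN_zero : N 0 ≤ 1 := by simp [(hNdef 0).2 rfl]
  refine dualNorm_le hN_zero fun a ha => ?_
  have hgrowth : ∀ i, ⟪y i t, a⟫ ≤ L * ∑ s ∈ range t, ∑ j, (P ^ s) i j := by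
    refine le_mul_sum_range_sum_pow_apply (z := fun i t => ⟪y i t, a⟫) hPnn
      (fun i => by simp only [hy0, inner_zero_left, le_refl]) (fun i s => ?_) t
    rw [hyrec, inner_add_left, sum_inner]
    simp only [real_inner_smul_left]
    gcongr
    exact (inner_le_dualNorm N hNtri hNsmul hNdef _ ha).trans (hg i s)
  have hB : ∀ i, L * ∑ s ∈ range t, ∑ j, (P ^ s) i j ≤ (n : ℝ) ^ 2 * L / (1 - p) + L := by
    intro i
    have h1p : 0 < 1 - p := by linarith
    calc L * ∑ s ∈ range t, ∑ j, (P ^ s) i j ≤ L * (1 + n * p / (1 - p)) := by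
          gcongr
          simpa using sum_range_sum_pow_apply_le hp0.le hp1 hPpow t i
      _ ≤ L * (1 + n * n / (1 - p)) := by
          gcongr L * (1 + ?_ / _)
          exact (mul_le_of_le_one_right n.cast_nonneg hp1.le).trans (mod_cast Nat.le_mul_self n)
      _ = (n : ℝ) ^ 2 * L / (1 - p) + L := by ring
  calc ⟪ybar t, a⟫ = ∑ i, π i * ⟪y i t, a⟫ := by
        simp only [hybar, sum_inner, real_inner_smul_left]
    _ ≤ ∑ i, π i * ((n : ℝ) ^ 2 * L / (1 - p) + L) := by
        gcongr with i
        · exact (hπ0 i).le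
        · exact (hgrowth i).trans (hB i)
    _ = (n : ℝ) ^ 2 * L / (1 - p) + L := by rw [← sum_mul, hπsum, one_mul]

/-- **Lemma 3 (bound on the dual norm of the weighted dual average).**
For the distributed dual averaging recursion `y_{i,t+1} = Σ_j P_{ij} y_{j,t} + g_{i,t}` with
`y_{i,0} = 0`, dual-norm-bounded increments `‖g_{i,t}‖_* ≤ L`, nonnegative `P` whose matrix
powers satisfy the entrywise decay `(P^k)_{ij} ≤ p^k` for `p ∈ (0,1)`, and weights
`π ∈ (0,1)^n` summing to one, the weighted average `ȳ_t = Σ_i π_i y_{i,t}` satisfies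
`‖ȳ_t‖_* ≤ n²L/(1 − p) + L` for all `t ≥ 1`. -/
theorem dual_average_norm_bound {m : ℕ} (n : ℕ) (hn : 1 ≤ n)
    -- `N` is a norm on `ℝ^m` and `Nd` its dual norm
    (N : EuclideanSpace ℝ (Fin m) → ℝ)
    (hNtri : ∀ a b, N (a + b) ≤ N a + N b)
    (hNsmul : ∀ (c : ℝ) (a : EuclideanSpace ℝ (Fin m)), N (c • a) = |c| * N a)
    (hNdef : ∀ a, N a = 0 ↔ a = 0)
    (Nd : EuclideanSpace ℝ (Fin m) → ℝ)
    (hNd : ∀ v, Nd v = sSup {r : ℝ | ∃ a, N a ≤ 1 ∧ r = ⟪v, a⟫})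
    -- `P` has nonnegative entries and entrywise geometrically decaying powers
    (P : Matrix (Fin n) (Fin n) ℝ)
    (hPnn : ∀ i j, 0 ≤ P i j)
    (p : ℝ) (hp0 : 0 < p) (hp1 : p < 1)
    (hPpow : ∀ k : ℕ, 1 ≤ k → ∀ i j, (P ^ k) i j ≤ p ^ k)
    -- the weights `π ∈ (0,1)^n`
    (π : Fin n → ℝ) (hπ0 : ∀ i, 0 < π i) (hπ1 : ∀ i, π i < 1)
    (hπsum : ∑ i, π i = 1)
    -- the dual variables and their bounded increments
    (L : ℝ) (hL : 0 ≤ L)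
    (g y : Fin n → ℕ → EuclideanSpace ℝ (Fin m))
    (hg : ∀ i t, Nd (g i t) ≤ L)
    (hy0 : ∀ i, y i 0 = 0)
    (hyrec : ∀ i t, y i (t + 1) = (∑ j, P i j • y j t) + g i t)
    -- the weighted dual average
    (ybar : ℕ → EuclideanSpace ℝ (Fin m))
    (hybar : ∀ t, ybar t = ∑ i, π i • y i t) :
    ∀ t : ℕ, 1 ≤ t → Nd (ybar t) ≤ (n : ℝ) ^ 2 * L / (1 - p) + L :=
  dual_average_norm_bound_general n N hNtri hNsmul hNdef Nd hNd P hPnn p hp0 hp1 hPpow π hπ0 hπsum L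
    hL g y hg hy0 hyrec ybar hybar
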